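/- arXiv:1603.02525 — 2 statements merged into one kernel-verified Lean document; each statement's English description precedes it below -/
import Mathlib

section
/- The map g, which flips the (d_0(x)+1)-th D-step touching the line y=0 of a path x, is a well-defined bijection from L_{2k,k} \ D_{2k}^k to L_{2k,k+1}, and its inverse is the map h', which flips the (u_1(x')+1)-th U-step touching the line y=1 of a path x' ∈ L_{2k,k+1}. -/
/-- Value of a step: `true` = U-step (+1), `false` = D-step (-1). -/
def stepVal (b : Bool) : ℤ := if b then 1 else -1

/-- Height of the lattice path `x` after its first `i` steps. -/
def pathHeight (x : List Bool) (i : ℕ) : ℤ := ((x.take i).map stepVal).sum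

/-- The step at position `i` (0-indexed) is a U-step. -/
def isU (x : List Bool) (i : ℕ) : Bool := x.getD i true

/-- The step at position `i` (0-indexed) is a D-step. -/
def isD (x : List Bool) (i : ℕ) : Bool := !(x.getD i true)

/-- Number of flaws: D-steps lying below the line y=0 (i.e. starting at height ≤ 0). -/
def flaws (x : List Bool) : ℕ :=
  ((List.range x.length).filter (fun i => isD x i && decide (pathHeight x i ≤ 0))).length

/-- `DyckSet k e` = the set `D_{2k}^e` of Dyck paths with `2k` steps and `e` flaws. -/
def DyckSet (k e : ℕ) : Set (List Bool) :=
  {x | x.length = 2*k ∧ x.count true = k ∧ flaws x = e}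

/-- `LSet k m` = the set `L_{2k,m}` of lattice paths with `2k` steps and `m` U-steps. -/
def LSet (k m : ℕ) : Set (List Bool) :=
  {x | x.length = 2*k ∧ x.count true = m}

/-- `d_c(x)`: number of D-steps of `x` starting on the line `y = c`. -/
def dstart (x : List Bool) (c : ℤ) : ℕ :=
  ((List.range x.length).filter (fun i => isD x i && decide (pathHeight x i = c))).length

/-- `u_c(x)`: number of U-steps of `x` starting on the line `y = c`. -/
def ustart (x : List Bool) (c : ℤ) : ℕ :=
  ((List.range x.length).filter (fun i => isU x i && decide (pathHeight x i = c))).length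

/-- Positions (in increasing order) of D-steps of `x` touching the line `y = c`
(a D-step at position `i` goes from height `pathHeight x i` down to `pathHeight x i - 1`,
so it touches `y = c` iff its start height is `c` or `c+1`). -/
def dtouch (x : List Bool) (c : ℤ) : List ℕ :=
  (List.range x.length).filter
    (fun i => isD x i && (decide (pathHeight x i = c) || decide (pathHeight x i = c+1)))

/-- Positions (in increasing order) of U-steps of `x` touching the line `y = c`
(a U-step at position `i` goes from height `pathHeight x i` up to `pathHeight x i + 1`,
so it touches `y = c` iff its start height is `c` or `c-1`). -/
def utouch (x : List Bool) (c : ℤ) : List ℕ :=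
  (List.range x.length).filter
    (fun i => isU x i && (decide (pathHeight x i = c) || decide (pathHeight x i = c-1)))

/-- Position (0-indexed) flipped by `g`: the `(d_0(x)+1)`-th D-step touching `y=0`. -/
def gIdx (x : List Bool) : ℕ := (dtouch x 0).getD (dstart x 0) 0

/-- The map `g`: flip the `(d_0(x)+1)`-th D-step of `x` touching the line `y=0`. -/
def gMap (x : List Bool) : List Bool := x.set (gIdx x) true

/-- Position (0-indexed) flipped by `h`: the `u_1(x)`-th U-step touching `y=1`. -/
def hIdx (x : List Bool) : ℕ := (utouch x 1).getD (ustart x 1 - 1) 0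

/-- The map `h`: flip the `u_1(x)`-th U-step of `x` touching the line `y=1`. -/
def hMap (x : List Bool) : List Bool := x.set (hIdx x) false

/-- Position (0-indexed) flipped by `g'`: the `d_0(x)`-th D-step touching `y=0`. -/
def g'Idx (x : List Bool) : ℕ := (dtouch x 0).getD (dstart x 0 - 1) 0

/-- The map `g'`: flip the `d_0(x)`-th D-step of `x` touching the line `y=0`. -/
def g'Map (x : List Bool) : List Bool := x.set (g'Idx x) true

/-- Position (0-indexed) flipped by `h'`: the `(u_1(x)+1)`-th U-step touching `y=1`. -/
def h'Idx (x : List Bool) : ℕ := (utouch x 1).getD (ustart x 1) 0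

/-- The map `h'`: flip the `(u_1(x)+1)`-th U-step of `x` touching the line `y=1`. -/
def h'Map (x : List Bool) : List Bool := x.set (h'Idx x) false

/-- The minimum-change map `f := h ∘ g`. -/
def fMap (x : List Bool) : List Bool := hMap (gMap x)

/-- `piSeq n x`: the sequence of (1-indexed) positions flipped by the successive
applications `g, h, g, h, ...` over `n` applications of `f` starting from `x`. -/
def piSeq : ℕ → List Bool → List ℕ
  | 0, _ => []
  | n+1, x => (gIdx x + 1) :: (hIdx (gMap x) + 1) :: piSeq n (fMap x)

/-- Reverse the step sequence and complement every step. -/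
def revComp (x : List Bool) : List Bool := x.reverse.map (fun b => !b)

/-!
`g` raises a D-step that starts at height 0 or 1, `h'` lowers a U-step that starts at height 0
or 1, and raising the step at `p` leaves the path unchanged before `p` and lifts it by 2 after
`p`. So both inverse identities come down to: `p` is selected by the rule of `g` in `x` iff it is
selected by the rule of `h'` in `x` with the step at `p` raised.

The tool is crossing counts: up- and down-crossings of the level `c + 1/2` alternate, and they are
the U-steps from `c` and the D-steps from `c + 1`. Applied at the levels `1/2` before `p` and
`-1/2` after `p`, both rules become
`#{D-steps from 1 before p} = [h(p) = 0] + #{D-steps from 0 after p}`.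
The same counts show that the selected steps exist: for `x ∈ L_{2k,k}` outside `D_{2k}^k` there
is a D-step from height 1, and a path ending at height 2 has a U-step from height 0.
-/

namespace Nat

theorem count_or_eq_add {P Q : ℕ → Bool} (h : ∀ i, ¬(P i ∧ Q i)) (n : ℕ) :
    count (fun i => P i || Q i) n = count (P ·) n + count (Q ·) n := by
  induction n with
  | zero => simp
  | succ n ih =>
    simp only [count_succ, ih]
    have := h n
    cases hP : P n <;> cases hQ : Q n <;> simp_all <;> omega

theorem count_add_count_eq_of_forall_iff {p q : ℕ → Prop} [DecidablePred p] [DecidablePred q]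
    {s t : ℕ} (hst : s ≤ t) (h : ∀ i, s ≤ i → i < t → (p i ↔ q i)) :
    count p t + count q s = count q t + count p s := by
  induction t, hst using Nat.le_induction with
  | base => omega
  | succ t hst ih =>
    rw [count_succ, count_succ, if_congr (h t hst (by omega)) rfl rfl]
    have := ih fun i h1 h2 => h i h1 (by omega)
    omega

theorem count_congr {p q : ℕ → Prop} [DecidablePred p] [DecidablePred q] {t : ℕ}
    (h : ∀ i < t, p i ↔ q i) : count p t = count q t := by
  simpa using count_add_count_eq_of_forall_iff (zero_le t) fun i _ => h i

theorem lt_count_iff_exists_count_eq {p : ℕ → Prop} [DecidablePred p] {j n : ℕ} :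
    j < count p n ↔ ∃ m < n, p m ∧ count p m = j := by
  constructor
  · intro hj
    have hcard : ∀ hf : (Set.ofPred p).Finite, j < hf.toFinset.card :=
      fun hf => hj.trans_le (count_le_card hf n)
    exact ⟨nth p j, nth_lt_of_lt_count hj, nth_mem j hcard, count_nth hcard⟩
  · rintro ⟨m, hmn, hm, rfl⟩
    exact count_strict_mono hm hmn

end Nat

namespace List

theorem length_filter_range (P : ℕ → Bool) (n : ℕ) :
    ((range n).filter P).length = Nat.count (P ·) n := by
  induction n with
  | zero => rfl
  | succ n ih =>
    rw [range_succ, filter_append, length_append, ih, Nat.count_succ]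
    cases h : P n <;> simp [h]

theorem getD_filter_range_count {P : ℕ → Bool} {m n : ℕ} (hm : m < n) (hP : P m) (d : ℕ) :
    ((range n).filter P).getD (Nat.count (P ·) m) d = m := by
  obtain ⟨r, rfl⟩ := Nat.exists_eq_add_of_le hm
  rw [range_add, range_succ, filter_append, filter_append, append_assoc, ← length_filter_range,
    getD_append_right _ _ _ _ le_rfl]
  simp [hP]

theorem getD_set_self {α : Type*} {l : List α} {p : ℕ} (hp : p < l.length) (a d : α) :
    (l.set p a).getD p d = a := by
  simp [getD_eq_getElem?_getD, hp]

theorem getD_set_of_ne {α : Type*} (l : List α) {p i : ℕ} (h : p ≠ i) (a d : α) :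
    (l.set p a).getD i d = l.getD i d := by
  simp [getD_eq_getElem?_getD, h]

theorem set_set_getD_self {α : Type*} {l : List α} {p : ℕ} (hp : p < l.length) (a d : α) :
    (l.set p a).set p (l.getD p d) = l := by
  rw [set_set, getD_eq_getElem _ _ hp, set_getElem_self]

end List

open Nat (count)

theorem pathHeight_succ {x : List Bool} {t : ℕ} (ht : t < x.length) :
    pathHeight x (t + 1) = pathHeight x t + stepVal (x.getD t true) := by
  rw [pathHeight, pathHeight, List.take_add_one, List.getElem?_eq_getElem ht, List.map_append,
    List.sum_append, List.getD_eq_getElem _ _ ht]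
  simp

theorem pathHeight_length (x : List Bool) :
    pathHeight x x.length = 2 * x.count true - x.length := by
  rw [pathHeight, List.take_length]
  induction x with
  | nil => simp
  | cons b x ih => cases b <;> simp [stepVal, ih] <;> ring

theorem getD_eq_false_of_isD {x : List Bool} {p : ℕ} (hD : isD x p) : x.getD p true = false := by
  simpa [isD] using hD

theorem lt_length_of_isD {x : List Bool} {p : ℕ} (hD : isD x p) : p < x.length := by
  by_contra h
  simp [isD, List.getElem?_eq_none (not_lt.mp h)] at hD

theorem pathHeight_set_of_le (x : List Bool) (b : Bool) {p i : ℕ} (h : i ≤ p) :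
    pathHeight (x.set p b) i = pathHeight x i := by
  rw [pathHeight, pathHeight, List.take_set_of_le h]

theorem pathHeight_set_true_of_lt {x : List Bool} {p i : ℕ} (hD : isD x p) (hpi : p < i)
    (hi : i ≤ x.length) : pathHeight (x.set p true) i = pathHeight x i + 2 := by
  induction i, hpi using Nat.le_induction with
  | base =>
    have hp := lt_length_of_isD hD
    rw [pathHeight_succ (by simpa using hp), pathHeight_succ hp, pathHeight_set_of_le x true le_rfl,
      List.getD_set_self hp, getD_eq_false_of_isD hD]
    simp only [stepVal, ↓reduceIte, Bool.false_eq_true]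
    ring
  | succ i hpi ih =>
    rw [pathHeight_succ (by simpa using hi), pathHeight_succ (by omega), ih (by omega),
      List.getD_set_of_ne _ (by omega)]
    ring

def upAt (x : List Bool) (c : ℤ) (i : ℕ) : Bool := isU x i && decide (pathHeight x i = c)

def downAt (x : List Bool) (c : ℤ) (i : ℕ) : Bool := isD x i && decide (pathHeight x i = c)

theorem ustart_eq_count (x : List Bool) (c : ℤ) : ustart x c = count (upAt x c ·) x.length :=
  List.length_filter_range _ _

theorem dstart_eq_count (x : List Bool) (c : ℤ) : dstart x c = count (downAt x c ·) x.length :=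
  List.length_filter_range _ _

theorem count_upAt_sub_count_downAt (x : List Bool) (c : ℤ) {t : ℕ} (ht : t ≤ x.length) :
    (count (upAt x c ·) t : ℤ) - count (downAt x (c + 1) ·) t
      = (if c < pathHeight x t then 1 else 0) - (if c < 0 then 1 else 0) := by
  induction t with
  | zero => simp [pathHeight]
  | succ t ih =>
    have ih := ih (by omega)
    rw [Nat.count_succ, Nat.count_succ, pathHeight_succ (by omega)]
    generalize count (upAt x c ·) t = u, count (downAt x (c + 1) ·) t = d at ih ⊢
    simp only [upAt, downAt, isU, isD]
    rcases Bool.eq_false_or_eq_true (x.getD t true) with hb | hb <;>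
      simp only [hb, stepVal, Bool.true_and, Bool.not_true, Bool.false_and, Bool.not_false,
        decide_eq_true_eq] <;> push_cast <;> split_ifs at ih ⊢ <;> omega

def downTouch (x : List Bool) (c : ℤ) (i : ℕ) : Bool := downAt x c i || downAt x (c + 1) i

def upTouch (x : List Bool) (c : ℤ) (i : ℕ) : Bool := upAt x c i || upAt x (c - 1) i

theorem dtouch_eq_filter (x : List Bool) (c : ℤ) :
    dtouch x c = (List.range x.length).filter (downTouch x c) := by
  simp only [dtouch, Bool.and_or_distrib_left]
  rfl

theorem utouch_eq_filter (x : List Bool) (c : ℤ) :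
    utouch x c = (List.range x.length).filter (upTouch x c) := by
  simp only [utouch, Bool.and_or_distrib_left]
  rfl

theorem count_downTouch (x : List Bool) (c : ℤ) (t : ℕ) :
    count (downTouch x c ·) t = count (downAt x c ·) t + count (downAt x (c + 1) ·) t :=
  Nat.count_or_eq_add
    (fun i h => by simp only [downAt, Bool.and_eq_true, decide_eq_true_eq] at h; omega) t

theorem count_upTouch (x : List Bool) (c : ℤ) (t : ℕ) :
    count (upTouch x c ·) t = count (upAt x c ·) t + count (upAt x (c - 1) ·) t :=
  Nat.count_or_eq_add
    (fun i h => by simp only [upAt, Bool.and_eq_true, decide_eq_true_eq] at h; omega) t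

def IsGFlip (x : List Bool) (p : ℕ) : Prop :=
  p < x.length ∧ downTouch x 0 p ∧ count (downTouch x 0 ·) p = dstart x 0

def IsH'Flip (y : List Bool) (q : ℕ) : Prop :=
  q < y.length ∧ upTouch y 1 q ∧ count (upTouch y 1 ·) q = ustart y 1

theorem gIdx_eq_of_isGFlip {x : List Bool} {p : ℕ} (h : IsGFlip x p) : gIdx x = p := by
  obtain ⟨hp, htouch, hcount⟩ := h
  rw [gIdx, dtouch_eq_filter, ← hcount]
  exact List.getD_filter_range_count hp htouch 0

theorem h'Idx_eq_of_isH'Flip {y : List Bool} {q : ℕ} (h : IsH'Flip y q) : h'Idx y = q := by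
  obtain ⟨hq, htouch, hcount⟩ := h
  rw [h'Idx, utouch_eq_filter, ← hcount]
  exact List.getD_filter_range_count hq htouch 0

theorem IsGFlip.isD {x : List Bool} {p : ℕ} (h : IsGFlip x p) : isD x p := by
  have := h.2.1
  simp only [downTouch, downAt, Bool.or_eq_true, Bool.and_eq_true] at this
  tauto

theorem IsH'Flip.isU {y : List Bool} {q : ℕ} (h : IsH'Flip y q) : isU y q := by
  have := h.2.1
  simp only [upTouch, upAt, Bool.or_eq_true, Bool.and_eq_true] at this
  tauto

theorem exists_isGFlip_iff (x : List Bool) : (∃ p, IsGFlip x p) ↔ 0 < dstart x 1 := by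
  have h := count_downTouch x 0 x.length
  rw [zero_add, ← dstart_eq_count, ← dstart_eq_count] at h
  rw [← lt_add_iff_pos_right, ← h, Nat.lt_count_iff_exists_count_eq]
  rfl

theorem exists_isH'Flip_iff (y : List Bool) : (∃ q, IsH'Flip y q) ↔ 0 < ustart y 0 := by
  have h := count_upTouch y 1 y.length
  rw [sub_self, ← ustart_eq_count, ← ustart_eq_count] at h
  rw [← lt_add_iff_pos_right, ← h, Nat.lt_count_iff_exists_count_eq]
  rfl

section RaisingADownStep

variable {x : List Bool} {p : ℕ}

theorem upAt_set_of_lt (b : Bool) (c : ℤ) {i : ℕ} (h : i < p) :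
    upAt (x.set p b) c i = upAt x c i := by
  rw [upAt, upAt, isU, isU, List.getD_set_of_ne _ h.ne', pathHeight_set_of_le x b h.le]

theorem count_upAt_set_of_le (b : Bool) (c : ℤ) {t : ℕ} (h : t ≤ p) :
    count (upAt (x.set p b) c ·) t = count (upAt x c ·) t :=
  Nat.count_congr fun i hi => by rw [upAt_set_of_lt b c (hi.trans_le h)]

theorem upAt_set_true_self (hp : p < x.length) (c : ℤ) :
    upAt (x.set p true) c p = decide (pathHeight x p = c) := by
  rw [upAt, isU, List.getD_set_self hp, pathHeight_set_of_le x true le_rfl, Bool.true_and]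

theorem upAt_set_true_of_lt (hD : isD x p) (c : ℤ) {i : ℕ} (hpi : p < i) (hi : i < x.length) :
    upAt (x.set p true) c i = upAt x (c - 2) i := by
  rw [upAt, upAt, isU, isU, List.getD_set_of_ne _ hpi.ne, pathHeight_set_true_of_lt hD hpi hi.le]
  congr 1
  exact decide_eq_decide.mpr (by omega)

theorem ustart_set_true (hD : isD x p) (c : ℤ) :
    (ustart (x.set p true) c : ℤ) = count (upAt x c ·) p + (if pathHeight x p = c then 1 else 0)
      + count (upAt x (c - 2) ·) x.length - count (upAt x (c - 2) ·) (p + 1) := by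
  have hp := lt_length_of_isD hD
  have hafter := Nat.count_add_count_eq_of_forall_iff (p := (upAt (x.set p true) c ·))
    (q := (upAt x (c - 2) ·)) (s := p + 1) hp fun i h1 h2 => by rw [upAt_set_true_of_lt hD c h1 h2]
  rw [Nat.count_succ (upAt (x.set p true) c ·), upAt_set_true_self hp,
    count_upAt_set_of_le true c le_rfl] at hafter
  rw [ustart_eq_count, List.length_set]
  simp only [decide_eq_true_eq] at hafter
  split_ifs at hafter ⊢ <;> omega

end RaisingADownStep

theorem isGFlip_iff_isH'Flip_set {x : List Bool} {p : ℕ} (hend : pathHeight x x.length = 0)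
    (hD : isD x p) : IsGFlip x p ↔ IsH'Flip (x.set p true) p := by
  have hp := lt_length_of_isD hD
  have hgt : downTouch x 0 p ↔ pathHeight x p = 0 ∨ pathHeight x p = 1 := by
    simp [downTouch, downAt, hD]
  have hht : upTouch (x.set p true) 1 p ↔ pathHeight x p = 0 ∨ pathHeight x p = 1 := by
    simp [upTouch, upAt_set_true_self hp, or_comm]
  simp only [IsGFlip, IsH'Flip, List.length_set, hgt, hht]
  refine and_congr_right fun _ => and_congr_right fun ha => ?_
  have hstep : pathHeight x (p + 1) = pathHeight x p - 1 := by
    rw [pathHeight_succ hp, getD_eq_false_of_isD hD, stepVal, if_neg Bool.false_ne_true]; ring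
  have hbefore := count_upTouch (x.set p true) 1 p
  rw [count_upAt_set_of_le true _ le_rfl, count_upAt_set_of_le true _ le_rfl] at hbefore
  have hd0 : count (downAt x 0 ·) (p + 1)
      = count (downAt x 0 ·) p + if pathHeight x p = 0 then 1 else 0 := by
    rw [Nat.count_succ, downAt, hD, Bool.true_and]
    simp only [decide_eq_true_eq]
  have hcross₀ := count_upAt_sub_count_downAt x 0 hp.le
  have hcross₁ := count_upAt_sub_count_downAt x (-1) (t := p + 1) hp
  have hcross₂ := count_upAt_sub_count_downAt x (-1) le_rfl
  have hu := ustart_set_true hD 1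
  rw [count_downTouch, hbefore, dstart_eq_count]
  norm_num [hstep, hend] at hcross₀ hcross₁ hcross₂ hu ⊢
  rcases ha with ha | ha <;> norm_num [ha] at hd0 hcross₀ hcross₁ hu <;> omega

theorem count_isD (x : List Bool) : count (isD x ·) x.length = x.length - x.count true := by
  induction x with
  | nil => rfl
  | cons b x ih =>
    rw [List.length_cons, Nat.count_succ']
    change count (isD x ·) x.length + (if (!b) = true then 1 else 0) = _
    rw [ih, List.count_cons]
    have := List.count_le_length (a := true) (l := x)
    cases b <;> simp only [Bool.not_false, Bool.not_true, beq_true,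
      ↓reduceIte, Bool.false_eq_true] <;> omega

theorem count_isD_eq_flaws_add (x : List Bool) :
    count (isD x ·) x.length
      = flaws x + count (fun i => isD x i && decide (0 < pathHeight x i)) x.length := by
  rw [flaws, List.length_filter_range, ← Nat.count_or_eq_add]
  · refine Nat.count_congr fun i _ => ?_
    cases isD x i <;> simp [le_or_gt]
  · intro i h
    simp only [Bool.and_eq_true, decide_eq_true_eq] at h
    omega

theorem flaws_lt_count_isD_iff (x : List Bool) :
    flaws x < count (isD x ·) x.length ↔ ∃ i < x.length, isD x i ∧ 0 < pathHeight x i := by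
  rw [count_isD_eq_flaws_add, lt_add_iff_pos_right, Nat.pos_iff_ne_zero, Nat.count_ne_iff_exists]
  simp only [Bool.and_eq_true, decide_eq_true_eq]

theorem dstart_one_pos_iff {x : List Bool} (hend : pathHeight x x.length = 0) :
    0 < dstart x 1 ↔ ∃ i < x.length, isD x i ∧ 0 < pathHeight x i := by
  constructor
  · intro h
    rw [dstart_eq_count, Nat.pos_iff_ne_zero, Nat.count_ne_iff_exists] at h
    obtain ⟨i, hi, hdown⟩ := h
    simp only [downAt, Bool.and_eq_true, decide_eq_true_eq] at hdown
    exact ⟨i, hi, hdown.1, by omega⟩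
  · rintro ⟨i, hi, -, hpos⟩
    have hcross_i := count_upAt_sub_count_downAt x 0 hi.le
    have hcross_end := count_upAt_sub_count_downAt x 0 le_rfl
    have hmono := Nat.count_monotone (upAt x 0 ·) hi.le
    rw [hend, dstart_eq_count] at *
    simp only [zero_add, lt_irrefl, if_false, hpos, if_true] at hcross_i hcross_end
    omega

theorem ustart_zero_pos {y : List Bool} (hend : 0 < pathHeight y y.length) : 0 < ustart y 0 := by
  have hcross := count_upAt_sub_count_downAt y 0 le_rfl
  rw [if_pos hend, ustart_eq_count] at *
  simp only [lt_irrefl, if_false] at hcross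
  omega

section Bijection

variable {k : ℕ}

theorem pathHeight_length_of_mem_LSet {m : ℕ} {x : List Bool} (hx : x ∈ LSet k m) :
    pathHeight x x.length = 2 * (m : ℤ) - 2 * k := by
  rw [pathHeight_length, hx.1, hx.2]
  push_cast
  ring

theorem mem_LSet_diff_DyckSet_iff {x : List Bool} :
    x ∈ LSet k k \ DyckSet k k ↔ x ∈ LSet k k ∧ 0 < dstart x 1 := by
  refine and_congr_right fun hx => ?_
  have hD : count (isD x ·) x.length = k := by rw [count_isD, hx.1, hx.2]; omega
  have hsplit := count_isD_eq_flaws_add x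
  have hend : pathHeight x x.length = 0 := by simpa using pathHeight_length_of_mem_LSet hx
  rw [dstart_one_pos_iff hend, ← flaws_lt_count_isD_iff, hD]
  simp only [DyckSet, Set.mem_ofPred_eq, hx.1, hx.2, true_and]
  omega

theorem set_true_mem_LSet {m : ℕ} {x : List Bool} {p : ℕ} (hx : x ∈ LSet k m) (hD : isD x p) :
    x.set p true ∈ LSet k (m + 1) := by
  have hp := lt_length_of_isD hD
  refine ⟨by rw [List.length_set, hx.1], ?_⟩
  rw [List.count_set hp, hx.2, ← List.getD_eq_getElem _ true hp, getD_eq_false_of_isD hD]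
  rfl

theorem set_false_mem_LSet {m : ℕ} {y : List Bool} {q : ℕ} (hy : y ∈ LSet k (m + 1))
    (hq : q < y.length) (hU : isU y q) : y.set q false ∈ LSet k m := by
  refine ⟨by rw [List.length_set, hy.1], ?_⟩
  rw [List.count_set hq, hy.2, ← List.getD_eq_getElem _ true hq]
  change (m + 1 - if isU y q == true then 1 else 0) + _ = m
  rw [hU]
  rfl

theorem h'Map_gMap {x : List Bool} (hx : x ∈ LSet k k \ DyckSet k k) :
    gMap x ∈ LSet k (k + 1) ∧ h'Map (gMap x) = x := by
  obtain ⟨hxL, hd1⟩ := mem_LSet_diff_DyckSet_iff.mp hx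
  obtain ⟨p, hp⟩ := (exists_isGFlip_iff x).mpr hd1
  have hend : pathHeight x x.length = 0 := by simpa using pathHeight_length_of_mem_LSet hxL
  have hh' := (isGFlip_iff_isH'Flip_set hend hp.isD).mp hp
  rw [gMap, gIdx_eq_of_isGFlip hp, h'Map, h'Idx_eq_of_isH'Flip hh', ← getD_eq_false_of_isD hp.isD]
  exact ⟨set_true_mem_LSet hxL hp.isD, List.set_set_getD_self hp.1 _ _⟩

theorem gMap_h'Map {y : List Bool} (hy : y ∈ LSet k (k + 1)) :
    h'Map y ∈ LSet k k \ DyckSet k k ∧ gMap (h'Map y) = y := by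
  have hend_y : 0 < pathHeight y y.length := by
    rw [pathHeight_length_of_mem_LSet hy]; push_cast; omega
  obtain ⟨q, hq⟩ := (exists_isH'Flip_iff y).mpr (ustart_zero_pos hend_y)
  set x := y.set q false with hx
  have hxL : x ∈ LSet k k := set_false_mem_LSet hy hq.1 hq.isU
  have hD : isD x q := by rw [hx, isD, List.getD_set_self hq.1]; rfl
  have hxy : x.set q true = y := by
    rw [hx, ← hq.isU]
    exact List.set_set_getD_self hq.1 _ _
  have hend : pathHeight x x.length = 0 := by simpa using pathHeight_length_of_mem_LSet hxL
  have hg := (isGFlip_iff_isH'Flip_set hend hD).mpr (hxy ▸ hq)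
  rw [h'Map, h'Idx_eq_of_isH'Flip hq, ← hx, mem_LSet_diff_DyckSet_iff, gMap,
    gIdx_eq_of_isGFlip hg, hxy]
  exact ⟨⟨hxL, (exists_isGFlip_iff x).mp ⟨q, hg⟩⟩, rfl⟩

end Bijection

theorem g_bijection (k : ℕ) :
    Set.BijOn gMap (LSet k k \ DyckSet k k) (LSet k (k+1)) ∧
    (∀ x ∈ LSet k k \ DyckSet k k, h'Map (gMap x) = x) ∧
    (∀ y ∈ LSet k (k+1), gMap (h'Map y) = y) := by
  have hinv : Set.InvOn h'Map gMap (LSet k k \ DyckSet k k) (LSet k (k + 1)) :=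
    ⟨fun x hx => (h'Map_gMap hx).2, fun y hy => (gMap_h'Map hy).2⟩
  exact ⟨hinv.bijOn (fun x hx => (h'Map_gMap hx).1) (fun y hy => (gMap_h'Map hy).1),
    hinv.1, hinv.2⟩
end

section
/- The map h, which flips the u_1(x)-th U-step touching the line y=1 of a path x ∈ L_{2k,k+1}, is a well-defined bijection from L_{2k,k+1} to L_{2k,k} \ D_{2k}^0, and its inverse is the map g', which flips the d_0(x')-th D-step touching the line y=0 of a path x' ∈ L_{2k,k} \ D_{2k}^0. -/
/-!
Split a path at the flipped step, `x = u ++ U :: v` and `y = u ++ D :: v`, the step starting at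
height `e ∈ {0, 1}`. Along any path, the U-steps from height `c` and the D-steps from height
`c + 1` alternate, so their numbers differ exactly by the net number of upward crossings of the
level `c + 1/2`. Applied to `u` at `c = 0`, and to `v` at `c = 1` in `x` (which is `c = -1` in
`y`, the suffix being lowered by two), this shows that the step is the `u_1(x)`-th U-step
touching `y = 1` in `x` if and only if it is the `d_0(y)`-th D-step touching `y = 0` in `y`.
Hence `h` and `g'` are mutually inverse. Since `x` ends at height `2` it has `u_1(x) ≥ 1`; a path
`y` with a flaw must step down from height `0`, so `d_0(y) ≥ 1`, and conversely `d_0(h x) ≥ 1`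
is a flaw of `h x`.
-/

open List

@[simp] lemma stepVal_true : stepVal true = 1 := rfl

@[simp] lemma stepVal_false : stepVal false = -1 := rfl

def endHeight (x : List Bool) : ℤ := (x.map stepVal).sum

@[simp] lemma endHeight_nil : endHeight [] = 0 := rfl

@[simp] lemma endHeight_cons (b : Bool) (x : List Bool) :
    endHeight (b :: x) = stepVal b + endHeight x := rfl

@[simp] lemma endHeight_append (x y : List Bool) :
    endHeight (x ++ y) = endHeight x + endHeight y := by
  simp [endHeight]

lemma endHeight_eq_count (x : List Bool) : endHeight x = 2 * x.count true - x.length := by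
  induction x with
  | nil => simp
  | cons b x ih => cases b <;> simp [stepVal, ih] <;> ring

lemma pathHeight_append_length (u w : List Bool) : pathHeight (u ++ w) u.length = endHeight u := by
  simp [pathHeight, endHeight]

@[simp] lemma pathHeight_zero (x : List Bool) : pathHeight x 0 = 0 := rfl

@[simp] lemma pathHeight_cons_succ (b : Bool) (x : List Bool) (i : ℕ) :
    pathHeight (b :: x) (i + 1) = stepVal b + pathHeight x i := by
  simp [pathHeight]

/-- The number of steps of `x` satisfying `P step h`, where `h` is the height the step starts
from when `x` itself starts at height `a`. -/
def countSteps (P : Bool → ℤ → Bool) : List Bool → ℤ → ℕ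
  | [], _ => 0
  | b :: x, a => (if P b a then 1 else 0) + countSteps P x (a + stepVal b)

def upsAt (c : ℤ) : List Bool → ℤ → ℕ := countSteps fun b h => b && decide (h = c)

def downsAt (c : ℤ) : List Bool → ℤ → ℕ := countSteps fun b h => !b && decide (h = c)

section countSteps

variable (P : Bool → ℤ → Bool)

@[simp] lemma countSteps_nil (a : ℤ) : countSteps P [] a = 0 := rfl

@[simp] lemma countSteps_cons (b : Bool) (x : List Bool) (a : ℤ) :
    countSteps P (b :: x) a = (if P b a then 1 else 0) + countSteps P x (a + stepVal b) := rfl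

lemma countSteps_append (x y : List Bool) (a : ℤ) :
    countSteps P (x ++ y) a = countSteps P x a + countSteps P y (a + endHeight x) := by
  induction x generalizing a with
  | nil => simp
  | cons b x ih => simp [ih, add_assoc]

lemma length_filter_range_eq_countSteps (x : List Bool) (p : ℕ) (hp : p ≤ x.length) (a : ℤ) :
    ((range p).filter fun i => P (x.getD i true) (a + pathHeight x i)).length
      = countSteps P (x.take p) a := by
  induction x generalizing p a with
  | nil => simp_all
  | cons b x ih =>
    cases p with
    | zero => simp
    | succ p =>
      rw [range_succ_eq_map, filter_cons, filter_map, take_succ_cons, countSteps_cons]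
      have hx := ih p (by simpa using hp) (a + stepVal b)
      simp only [Function.comp_def, Nat.succ_eq_add_one, getD_cons_succ, getD_cons_zero,
        pathHeight_cons_succ, pathHeight_zero, ← add_assoc, add_zero] at hx ⊢
      cases P b a <;> simp only [hx, if_true, if_false, Bool.false_eq_true, length_map,
        length_cons] <;> omega

end countSteps

lemma countSteps_or {P Q : Bool → ℤ → Bool} (h : ∀ b a, ¬(P b a ∧ Q b a)) (x : List Bool)
    (a : ℤ) :
    countSteps (fun b a => P b a || Q b a) x a = countSteps P x a + countSteps Q x a := by
  induction x generalizing a with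
  | nil => simp
  | cons b x ih =>
    have := h b a
    cases hP : P b a <;> cases hQ : Q b a <;> simp_all <;> omega

lemma upsAt_append_cons (c : ℤ) (u : List Bool) (b : Bool) (v : List Bool) :
    upsAt c (u ++ b :: v) 0
      = upsAt c u 0 + (if b ∧ endHeight u = c then 1 else 0)
        + upsAt c v (endHeight u + stepVal b) := by
  simp [upsAt, countSteps_append, add_assoc]

lemma downsAt_append_cons (c : ℤ) (u : List Bool) (b : Bool) (v : List Bool) :
    downsAt c (u ++ b :: v) 0
      = downsAt c u 0 + (if b = false ∧ endHeight u = c then 1 else 0)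
        + downsAt c v (endHeight u + stepVal b) := by
  simp [downsAt, countSteps_append, add_assoc]

lemma upsAt_eq_of_sub_eq {c c' a a' : ℤ} (h : c - a = c' - a') (x : List Bool) :
    upsAt c x a = upsAt c' x a' := by
  induction x generalizing a a' with
  | nil => rfl
  | cons b x ih =>
    simp only [upsAt, countSteps_cons] at ih ⊢
    rw [ih (a := a + stepVal b) (a' := a' + stepVal b) (by omega)]
    have hca : a = c ↔ a' = c' := by omega
    simp [hca]

lemma downsAt_eq_of_sub_eq {c c' a a' : ℤ} (h : c - a = c' - a') (x : List Bool) :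
    downsAt c x a = downsAt c' x a' := by
  induction x generalizing a a' with
  | nil => rfl
  | cons b x ih =>
    simp only [downsAt, countSteps_cons] at ih ⊢
    rw [ih (a := a + stepVal b) (a' := a' + stepVal b) (by omega)]
    have hca : a = c ↔ a' = c' := by omega
    simp [hca]

lemma upsAt_sub_downsAt (c : ℤ) (x : List Bool) (a : ℤ) :
    (upsAt c x a : ℤ) - downsAt (c + 1) x a
      = (if a ≤ c ∧ c < a + endHeight x then 1 else 0)
        - (if a + endHeight x ≤ c ∧ c < a then 1 else 0) := by
  induction x generalizing a with
  | nil => simp [upsAt, downsAt]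
  | cons b x ih =>
    have h := ih (a + stepVal b)
    simp only [upsAt, downsAt, countSteps_cons, endHeight_cons] at h ⊢
    cases b <;> simp at h ⊢ <;> split_ifs at h ⊢ <;> omega

lemma ustart_eq_upsAt (x : List Bool) (c : ℤ) : ustart x c = upsAt c x 0 := by
  simpa [ustart, upsAt, isU] using
    length_filter_range_eq_countSteps (fun b h => b && decide (h = c)) x x.length le_rfl 0

lemma dstart_eq_downsAt (x : List Bool) (c : ℤ) : dstart x c = downsAt c x 0 := by
  simpa [dstart, downsAt, isD] using
    length_filter_range_eq_countSteps (fun b h => !b && decide (h = c)) x x.length le_rfl 0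

lemma flaws_eq_countSteps (x : List Bool) :
    flaws x = countSteps (fun b h => !b && decide (h ≤ 0)) x 0 := by
  simpa [flaws, isD] using
    length_filter_range_eq_countSteps (fun b h => !b && decide (h ≤ 0)) x x.length le_rfl 0

lemma dstart_zero_le_flaws (x : List Bool) : dstart x 0 ≤ flaws x := by
  simp only [dstart, flaws, ← countP_eq_length_filter]
  refine countP_mono_left fun i _ hi => ?_
  simp_all

lemma one_le_ustart_one {x : List Bool} (hx : endHeight x = 2) : 1 ≤ ustart x 1 := by
  have h := upsAt_sub_downsAt 1 x 0
  simp only [hx] at h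
  rw [ustart_eq_upsAt]
  norm_num at h
  omega

lemma downsAt_zero_ne_zero_of_flaw (x : List Bool) {a : ℤ} (ha : 0 ≤ a)
    (hx : countSteps (fun b h => !b && decide (h ≤ 0)) x a ≠ 0) : downsAt 0 x a ≠ 0 := by
  induction x generalizing a with
  | nil => simp at hx
  | cons b x ih =>
    simp only [downsAt, countSteps_cons] at hx ⊢
    cases b
    · rcases ha.eq_or_lt with rfl | ha
      · simp
      · simp only [ha.not_ge, ha.ne', decide_false, Bool.and_false] at hx ⊢
        simpa [downsAt] using ih (by simp; omega) (by simpa using hx)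
    · simpa [downsAt] using ih (by omega) (by simpa using hx)

lemma one_le_dstart_zero {x : List Bool} (hx : flaws x ≠ 0) : 1 ≤ dstart x 0 := by
  rw [flaws_eq_countSteps] at hx
  rw [dstart_eq_downsAt]
  have := downsAt_zero_ne_zero_of_flaw x le_rfl hx
  omega

section FilterRange

variable {q : ℕ → Bool} {n p : ℕ}

lemma filter_range_eq_append (hp : p < n) (hq : q p) :
    ∃ t, (range n).filter q = (range p).filter q ++ p :: t := by
  obtain ⟨m, rfl⟩ := Nat.exists_eq_add_of_le hp
  rw [range_add, range_succ, filter_append, filter_append, filter_cons_of_pos hq]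
  simp only [filter_nil, append_assoc, cons_append, nil_append]
  exact ⟨_, rfl⟩

lemma getD_filter_range_length (hp : p < n) (hq : q p) :
    ((range n).filter q).getD ((range p).filter q).length 0 = p := by
  obtain ⟨t, ht⟩ := filter_range_eq_append hp hq
  simp [ht]

lemma filter_range_getD_spec {j : ℕ} (hj : j < ((range n).filter q).length) :
    ((range n).filter q).getD j 0 < n ∧ q (((range n).filter q).getD j 0) ∧
      ((range (((range n).filter q).getD j 0)).filter q).length = j := by
  set L := (range n).filter q
  obtain ⟨p, hpj⟩ : ∃ p, L.getD j 0 = p := ⟨_, rfl⟩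
  have hmem : p ∈ L := by
    rw [← hpj, getD_eq_getElem _ _ hj]
    exact getElem_mem hj
  obtain ⟨hp, hq⟩ := mem_filter.mp hmem
  have hp := mem_range.mp hp
  rw [hpj]
  refine ⟨hp, hq, ?_⟩
  obtain ⟨t, ht⟩ := filter_range_eq_append hp hq
  have hlt : ((range p).filter q).length < L.length := by simp [L, ht]
  have hL : L.getD ((range p).filter q).length 0 = L.getD j 0 := by
    rw [hpj]; exact getD_filter_range_length hp hq
  rw [getD_eq_getElem _ _ hj, getD_eq_getElem _ _ hlt] at hL
  exact (Nodup.getElem_inj_iff (nodup_range.filter q : L.Nodup)).mp hL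

end FilterRange

def touchesUp (x : List Bool) (c : ℤ) (i : ℕ) : Bool :=
  isU x i && (decide (pathHeight x i = c) || decide (pathHeight x i = c - 1))

def touchesDown (x : List Bool) (c : ℤ) (i : ℕ) : Bool :=
  isD x i && (decide (pathHeight x i = c) || decide (pathHeight x i = c + 1))

lemma length_filter_touchesUp {x : List Bool} {p : ℕ} (hp : p ≤ x.length) (c : ℤ) :
    ((range p).filter (touchesUp x c)).length
      = upsAt c (x.take p) 0 + upsAt (c - 1) (x.take p) 0 := by
  rw [upsAt, upsAt, ← countSteps_or fun b a h => by
    simp only [Bool.and_eq_true, decide_eq_true_eq] at h; omega,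
    ← length_filter_range_eq_countSteps _ x p hp]
  exact congrArg length (filter_congr fun i _ => by simp [touchesUp, isU, Bool.and_or_distrib_left])

lemma length_filter_touchesDown {x : List Bool} {p : ℕ} (hp : p ≤ x.length) (c : ℤ) :
    ((range p).filter (touchesDown x c)).length
      = downsAt c (x.take p) 0 + downsAt (c + 1) (x.take p) 0 := by
  rw [downsAt, downsAt, ← countSteps_or fun b a h => by
    simp only [Bool.and_eq_true, decide_eq_true_eq] at h; omega,
    ← length_filter_range_eq_countSteps _ x p hp]
  exact congrArg length
    (filter_congr fun i _ => by simp [touchesDown, isD, Bool.and_or_distrib_left])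

section FlipIndex

variable {x : List Bool} {p : ℕ}

lemma hIdx_spec (hx : 1 ≤ ustart x 1) :
    hIdx x < x.length ∧ touchesUp x 1 (hIdx x) ∧
      ((range (hIdx x)).filter (touchesUp x 1)).length + 1 = ustart x 1 := by
  have hle : ustart x 1 ≤ ((range x.length).filter (touchesUp x 1)).length := by
    simp only [ustart, ← countP_eq_length_filter]
    exact countP_mono_left fun i _ hi => by simp_all [touchesUp]
  obtain ⟨hlt, hq, hc⟩ :=
    filter_range_getD_spec (q := touchesUp x 1) (n := x.length) (j := ustart x 1 - 1) (by omega)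
  change ((range (hIdx x)).filter (touchesUp x 1)).length = ustart x 1 - 1 at hc
  exact ⟨hlt, hq, by omega⟩

lemma hIdx_eq (hp : p < x.length) (hq : touchesUp x 1 p)
    (hc : ((range p).filter (touchesUp x 1)).length + 1 = ustart x 1) : hIdx x = p := by
  rw [hIdx, show ustart x 1 - 1 = ((range p).filter (touchesUp x 1)).length by omega]
  exact getD_filter_range_length hp hq

lemma g'Idx_spec (hx : 1 ≤ dstart x 0) :
    g'Idx x < x.length ∧ touchesDown x 0 (g'Idx x) ∧
      ((range (g'Idx x)).filter (touchesDown x 0)).length + 1 = dstart x 0 := by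
  have hle : dstart x 0 ≤ ((range x.length).filter (touchesDown x 0)).length := by
    simp only [dstart, ← countP_eq_length_filter]
    exact countP_mono_left fun i _ hi => by simp_all [touchesDown]
  obtain ⟨hlt, hq, hc⟩ :=
    filter_range_getD_spec (q := touchesDown x 0) (n := x.length) (j := dstart x 0 - 1) (by omega)
  change ((range (g'Idx x)).filter (touchesDown x 0)).length = dstart x 0 - 1 at hc
  exact ⟨hlt, hq, by omega⟩

lemma g'Idx_eq (hp : p < x.length) (hq : touchesDown x 0 p)
    (hc : ((range p).filter (touchesDown x 0)).length + 1 = dstart x 0) : g'Idx x = p := by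
  rw [g'Idx, show dstart x 0 - 1 = ((range p).filter (touchesDown x 0)).length by omega]
  exact getD_filter_range_length hp hq

end FlipIndex

lemma length_filter_touchesUp_add_one_eq_iff (u v : List Bool)
    (hu : endHeight u = 0 ∨ endHeight u = 1)
    (huv : endHeight u + endHeight v = 1) :
    ((range u.length).filter (touchesUp (u ++ true :: v) 1)).length + 1
        = ustart (u ++ true :: v) 1 ↔
      ((range u.length).filter (touchesDown (u ++ false :: v) 0)).length + 1
        = dstart (u ++ false :: v) 0 := by
  have hle : ∀ b, u.length ≤ (u ++ b :: v).length := by simp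
  have hvU : upsAt 1 v (endHeight u + stepVal true) = upsAt (-1) v (endHeight u - 1) :=
    upsAt_eq_of_sub_eq (by simp; ring) v
  have hvD : downsAt 0 v (endHeight u + stepVal false) = downsAt (-1 + 1) v (endHeight u - 1) :=
    downsAt_eq_of_sub_eq (by simp; ring) v
  rw [length_filter_touchesUp (hle _), length_filter_touchesDown (hle _), take_left, take_left,
    ustart_eq_upsAt, dstart_eq_downsAt, upsAt_append_cons, downsAt_append_cons, hvU, hvD]
  have hu0 := upsAt_sub_downsAt 0 u 0
  have hv := upsAt_sub_downsAt (-1) v (endHeight u - 1)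
  rcases hu with hu | hu <;> simp [hu] at hu0 hv ⊢ <;> omega

lemma exists_eq_append_cons {α : Type*} (x : List α) {p : ℕ} (hp : p < x.length) :
    ∃ u b v, x = u ++ b :: v ∧ u.length = p :=
  ⟨x.take p, x[p], x.drop (p + 1), by rw [getElem_cons_drop, take_append_drop], by simp; omega⟩

lemma touchesUp_append_length (u v : List Bool) (b : Bool) (c : ℤ) :
    touchesUp (u ++ b :: v) c u.length
      = (b && (decide (endHeight u = c) || decide (endHeight u = c - 1))) := by
  simp [touchesUp, isU, pathHeight_append_length]

lemma touchesDown_append_length (u v : List Bool) (b : Bool) (c : ℤ) :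
    touchesDown (u ++ b :: v) c u.length
      = (!b && (decide (endHeight u = c) || decide (endHeight u = c + 1))) := by
  simp [touchesDown, isD, pathHeight_append_length]

lemma hIdx_eq_iff_g'Idx_eq (u v : List Bool) (hu : endHeight u = 0 ∨ endHeight u = 1)
    (huv : endHeight u + endHeight v = 1) :
    (hIdx (u ++ true :: v) = u.length ∧ 1 ≤ ustart (u ++ true :: v) 1) ↔
      (g'Idx (u ++ false :: v) = u.length ∧ 1 ≤ dstart (u ++ false :: v) 0) := by
  have hlen : ∀ b, u.length < (u ++ b :: v).length := by simp
  have hU : touchesUp (u ++ true :: v) 1 u.length := by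
    rw [touchesUp_append_length]; simp; omega
  have hD : touchesDown (u ++ false :: v) 0 u.length := by
    rw [touchesDown_append_length]; simp; omega
  constructor
  · rintro ⟨hp, hx⟩
    have hc := (hIdx_spec hx).2.2
    rw [hp, length_filter_touchesUp_add_one_eq_iff u v hu huv] at hc
    exact ⟨g'Idx_eq (hlen _) hD hc, by omega⟩
  · rintro ⟨hp, hy⟩
    have hc := (g'Idx_spec hy).2.2
    rw [hp, ← length_filter_touchesUp_add_one_eq_iff u v hu huv] at hc
    exact ⟨hIdx_eq (hlen _) hU hc, by omega⟩

lemma hMap_mem_and_g'Map_hMap {k : ℕ} {x : List Bool} (hx : x ∈ LSet k (k + 1)) :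
    hMap x ∈ LSet k k \ DyckSet k 0 ∧ g'Map (hMap x) = x := by
  obtain ⟨hl, hc⟩ := hx
  have h2 : endHeight x = 2 := by rw [endHeight_eq_count, hl, hc]; push_cast; ring
  have h1 := one_le_ustart_one h2
  obtain ⟨hp, hq, -⟩ := hIdx_spec h1
  obtain ⟨u, b, v, rfl, hu⟩ := exists_eq_append_cons x hp
  rw [← hu, touchesUp_append_length] at hq
  simp only [Bool.and_eq_true, Bool.or_eq_true, decide_eq_true_eq] at hq
  obtain ⟨rfl, hh⟩ := hq
  have hy : hMap (u ++ true :: v) = u ++ false :: v := by rw [hMap, ← hu]; simp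
  obtain ⟨hg, hd⟩ :=
    (hIdx_eq_iff_g'Idx_eq u v (by omega) (by simp at h2; omega)).1 ⟨hu.symm, h1⟩
  refine ⟨⟨⟨?_, ?_⟩, fun hD => ?_⟩, by rw [hy, g'Map, hg]; simp⟩
  · simpa [hy] using hl
  · simp [hy] at hc ⊢; omega
  · have := dstart_zero_le_flaws (hMap (u ++ true :: v))
    rw [hD.2.2, hy] at this
    omega

lemma g'Map_mem_and_hMap_g'Map {k : ℕ} {y : List Bool} (hy : y ∈ LSet k k \ DyckSet k 0) :
    g'Map y ∈ LSet k (k + 1) ∧ hMap (g'Map y) = y := by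
  obtain ⟨⟨hl, hc⟩, hD⟩ := hy
  have h0 : endHeight y = 0 := by rw [endHeight_eq_count, hl, hc]; push_cast; ring
  have h1 : 1 ≤ dstart y 0 := one_le_dstart_zero fun h => hD ⟨hl, hc, h⟩
  obtain ⟨hp, hq, -⟩ := g'Idx_spec h1
  obtain ⟨u, b, v, rfl, hu⟩ := exists_eq_append_cons y hp
  rw [← hu, touchesDown_append_length] at hq
  simp only [Bool.and_eq_true, Bool.or_eq_true, decide_eq_true_eq, Bool.not_eq_true'] at hq
  obtain ⟨rfl, hh⟩ := hq
  have hx : g'Map (u ++ false :: v) = u ++ true :: v := by rw [g'Map, ← hu]; simp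
  obtain ⟨hi, -⟩ :=
    (hIdx_eq_iff_g'Idx_eq u v (by omega) (by simp at h0; omega)).2 ⟨hu.symm, h1⟩
  refine ⟨⟨?_, ?_⟩, by rw [hx, hMap, hi]; simp⟩
  · simpa [hx] using hl
  · simp [hx] at hc ⊢; omega

theorem h_bijection (k : ℕ) :
    Set.BijOn hMap (LSet k (k+1)) (LSet k k \ DyckSet k 0) ∧
    (∀ x ∈ LSet k (k+1), g'Map (hMap x) = x) ∧
    (∀ y ∈ LSet k k \ DyckSet k 0, hMap (g'Map y) = y) := by
  have hh (x) (hx : x ∈ LSet k (k+1)) := hMap_mem_and_g'Map_hMap hx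
  have hg (y) (hy : y ∈ LSet k k \ DyckSet k 0) := g'Map_mem_and_hMap_g'Map hy
  exact ⟨Set.InvOn.bijOn ⟨fun x hx => (hh x hx).2, fun y hy => (hg y hy).2⟩
    (fun x hx => (hh x hx).1) (fun y hy => (hg y hy).1),
    fun x hx => (hh x hx).2, fun y hy => (hg y hy).2⟩
end
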